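/- Let f : (ℝ^d)^H → ℝ be twice differentiable with β-Lipschitz gradient (β-smooth), write H̄ = H − 1, and let f̃(x) = f(x, …, x). Suppose the random tuples X = (x_{t−H̄}, …, x_t) ∈ (ℝ^d)^H and the random vector x_{t+H̄} ∈ ℝ^d satisfy E[‖X − (x_{t+H̄}, …, x_{t+H̄})‖²] ≤ 8·η²·d²H⁴/δ² for some η, δ > 0. Then E[‖Σ_{i=0}^{H̄} ∇_i f(X) − ∇f̃(x_{t+H̄})‖] ≤ 3·β·η·H^{5/2}·d/δ. -/

import Mathlib

/-!
Both `∑ i, ∇_i f (X)` and `∇f̃ (x') = ∑ i, ∇_i f (x', …, x')` are sums of the `H` blocks of a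
full gradient of `f`, and summing the `H` blocks of a vector of `(ℝ^d)^H` costs at most a factor
`√H` in norm (Cauchy–Schwarz). With `β`-smoothness the difference is therefore bounded pointwise
by `√H β ‖X − (x', …, x')‖`; Jensen's inequality `E‖·‖ ≤ √(E‖·‖²)` and `√8 ≤ 3` give the constant.
-/

open MeasureTheory ProbabilityTheory

/-- `ℝ^d` with the Euclidean norm. -/
noncomputable abbrev Ed (d : ℕ) : Type := EuclideanSpace ℝ (Fin d)

/-- `(ℝ^d)^H` with the Euclidean norm `‖(v_0, …, v_{H-1})‖² = ∑ i, ‖v_i‖²`. -/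
noncomputable abbrev Tup (d H : ℕ) : Type := PiLp 2 (fun _ : Fin H => Ed d)

/-- Package `H` vectors of `ℝ^d` as an element of `(ℝ^d)^H`. -/
def tup {d H : ℕ} (v : Fin H → Ed d) : Tup d H := WithLp.toLp 2 v

noncomputable instance {d H : ℕ} : MeasurableSpace (Tup d H) := borel _
instance {d H : ℕ} : BorelSpace (Tup d H) := ⟨rfl⟩

/-- The partial gradient `∇_i f (x)` of `f : (ℝ^d)^H → ℝ` with respect to its `i`-th
`ℝ^d`-valued argument, evaluated at `x`. -/
noncomputable def pgrad {d H : ℕ} (f : Tup d H → ℝ) (x : Tup d H) (i : Fin H) : Ed d :=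
  gradient (fun z => f (WithLp.toLp 2 (Function.update x i z))) (x i)

open RealInnerProductSpace

section
variable {F G : Type*} [NormedAddCommGroup F] [InnerProductSpace ℝ F] [CompleteSpace F]
  [NormedAddCommGroup G] [InnerProductSpace ℝ G] [CompleteSpace G]

theorem inner_gradient_comp_left {f : F → ℝ} {g : G → F} {L : G →L[ℝ] F} {y : G}
    (hg : HasFDerivAt g L y) (hf : DifferentiableAt ℝ f (g y)) (w : G) :
    ⟪gradient (fun z => f (g z)) y, w⟫ = ⟪gradient f (g y), L w⟫ := by
  rw [inner_gradient_left, inner_gradient_left]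
  exact congrArg (· w) (hf.hasFDerivAt.comp y hg).fderiv

end

namespace PiLp

variable {ι : Type*} [Fintype ι]

theorem gradient_comp_update [DecidableEq ι] {E : ι → Type*} [∀ i, NormedAddCommGroup (E i)]
    [∀ i, InnerProductSpace ℝ (E i)] [∀ i, CompleteSpace (E i)] {f : PiLp 2 E → ℝ}
    {x : PiLp 2 E} (hf : DifferentiableAt ℝ f x) (i : ι) :
    gradient (fun z => f (WithLp.toLp 2 (Function.update x i z))) (x i) = gradient f x i := by
  have hupd : HasFDerivAt (fun z => WithLp.toLp 2 (Function.update x i z))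
      ((continuousLinearEquiv 2 ℝ E).symm.toContinuousLinearMap ∘L
        .pi (Pi.single i (.id ℝ (E i)))) (x i) :=
    (continuousLinearEquiv 2 ℝ E).symm.hasFDerivAt.comp _ (hasFDerivAt_update _ _)
  refine ext_inner_right ℝ fun w => ?_
  rw [inner_gradient_comp_left hupd (by simpa using hf)]
  simp only [ContinuousLinearMap.comp_apply, ContinuousLinearEquiv.coe_coe,
    coe_symm_continuousLinearEquiv, ContinuousLinearMap.pi_apply, inner_apply,
    Function.update_eq_self, WithLp.toLp_ofLp]
  rw [Finset.sum_eq_single_of_mem i (Finset.mem_univ i) fun j _ hj => by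
    simp [Pi.single_eq_of_ne hj], Pi.single_eq_same]
  rfl

theorem norm_sum_le_sqrt_card_mul_norm {E : Type*} [SeminormedAddCommGroup E]
    (v : PiLp 2 fun _ : ι => E) : ‖∑ i, v i‖ ≤ √(Fintype.card ι) * ‖v‖ := by
  have hcs : (∑ i, ‖v i‖) ^ 2 ≤ Fintype.card ι * ‖v‖ ^ 2 := by
    simpa [norm_sq_eq_of_L2] using
      sq_sum_le_card_mul_sum_sq (s := Finset.univ) (f := fun i => ‖v i‖)
  calc ‖∑ i, v i‖ ≤ ∑ i, ‖v i‖ := norm_sum_le _ _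
    _ ≤ √(Fintype.card ι * ‖v‖ ^ 2) := (le_abs_self _).trans (Real.abs_le_sqrt hcs)
    _ = √(Fintype.card ι) * ‖v‖ := by
      rw [Real.sqrt_mul (Nat.cast_nonneg _), Real.sqrt_sq (norm_nonneg _)]

variable {E : Type*} [NormedAddCommGroup E] [InnerProductSpace ℝ E] [CompleteSpace E]
  {f : PiLp 2 (fun _ : ι => E) → ℝ} {y : E}

theorem gradient_comp_diag (hf : DifferentiableAt ℝ f (WithLp.toLp 2 fun _ => y)) :
    gradient (fun z => f (WithLp.toLp 2 fun _ => z)) y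
      = ∑ i, gradient f (WithLp.toLp 2 fun _ => y) i := by
  have hdiag : HasFDerivAt (fun z : E => WithLp.toLp 2 fun _ : ι => z)
      ((continuousLinearEquiv 2 ℝ _).symm.toContinuousLinearMap ∘L .pi fun _ => .id ℝ E) y :=
    ((continuousLinearEquiv 2 ℝ _).symm.toContinuousLinearMap ∘L .pi fun _ => .id ℝ E).hasFDerivAt
  refine ext_inner_right ℝ fun w => ?_
  rw [inner_gradient_comp_left hdiag hf, sum_inner, inner_apply]
  rfl

theorem norm_sum_sub_gradient_comp_diag_le (x : PiLp 2 fun _ : ι => E)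
    (hf : DifferentiableAt ℝ f (WithLp.toLp 2 fun _ => y)) :
    ‖∑ i, gradient f x i - gradient (fun z => f (WithLp.toLp 2 fun _ => z)) y‖
      ≤ √(Fintype.card ι) * ‖gradient f x - gradient f (WithLp.toLp 2 fun _ => y)‖ := by
  rw [gradient_comp_diag hf, ← Finset.sum_sub_distrib]
  exact norm_sum_le_sqrt_card_mul_norm (gradient f x - gradient f _)

end PiLp

theorem pgrad_eq_gradient_apply {d H : ℕ} {f : Tup d H → ℝ} {x : Tup d H}
    (hf : DifferentiableAt ℝ f x) (i : Fin H) : pgrad f x i = gradient f x i :=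
  PiLp.gradient_comp_update hf i

theorem norm_sum_pgrad_sub_gradient_diag_le {d H : ℕ} {f : Tup d H → ℝ} {β : ℝ}
    (hf : Differentiable ℝ f)
    (hsmooth : ∀ a b : Tup d H, ‖gradient f a - gradient f b‖ ≤ β * ‖a - b‖)
    (x : Tup d H) (y : Ed d) :
    ‖(∑ i : Fin H, pgrad f x i) - gradient (fun z : Ed d => f (WithLp.toLp 2 (fun _ => z))) y‖
      ≤ √H * β * ‖x - tup (fun _ => y)‖ := by
  simp only [pgrad_eq_gradient_apply (hf _)]
  calc _ ≤ √H * ‖gradient f x - gradient f (WithLp.toLp 2 fun _ => y)‖ := by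
        simpa using PiLp.norm_sum_sub_gradient_comp_diag_le x (hf _)
    _ ≤ √H * β * ‖x - tup (fun _ => y)‖ := by
        rw [mul_assoc]; gcongr; exact hsmooth _ _

theorem integral_le_sqrt_integral_sq {Ω : Type*} [MeasurableSpace Ω] {μ : Measure Ω}
    [IsProbabilityMeasure μ] {Z : Ω → ℝ} (hZ : MemLp Z 2 μ) :
    ∫ ω, Z ω ∂μ ≤ √(∫ ω, Z ω ^ 2 ∂μ) := by
  have hsq : (∫ ω, Z ω ∂μ) ^ 2 ≤ ∫ ω, Z ω ^ 2 ∂μ := by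
    have := variance_nonneg Z μ
    rw [variance_eq_sub hZ] at this
    simp only [Pi.pow_apply] at this
    linarith
  exact (le_abs_self _).trans (Real.abs_le_sqrt hsq)

theorem sqrt_mul_sqrt_eight_mul_le {H d β η δ : ℝ} (hH : 0 ≤ H) (hd : 0 ≤ d) (hβ : 0 ≤ β)
    (hη : 0 ≤ η) (hδ : 0 ≤ δ) :
    √H * β * √(8 * η ^ 2 * d ^ 2 * H ^ 4 / δ ^ 2) ≤ 3 * β * η * H ^ ((5 : ℝ) / 2) * d / δ := by
  have h8 : √8 ≤ 3 := Real.sqrt_le_iff.mpr ⟨by norm_num, by norm_num⟩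
  have hsqrt : √(8 * η ^ 2 * d ^ 2 * H ^ 4 / δ ^ 2) = √8 * (η * d * H ^ 2 / δ) := by
    rw [show 8 * η ^ 2 * d ^ 2 * H ^ 4 / δ ^ 2 = 8 * (η * d * H ^ 2 / δ) ^ 2 by ring,
      Real.sqrt_mul (by norm_num), Real.sqrt_sq (by positivity)]
  have hrpow : H ^ ((5 : ℝ) / 2) = H ^ 2 * √H := by
    rw [Real.sqrt_eq_rpow, ← Real.rpow_natCast, ← Real.rpow_add' hH (by norm_num)]
    norm_num
  calc √H * β * √(8 * η ^ 2 * d ^ 2 * H ^ 4 / δ ^ 2)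
      = √8 * (√H * β * (η * d * H ^ 2 / δ)) := by rw [hsqrt]; ring
    _ ≤ 3 * (√H * β * (η * d * H ^ 2 / δ)) := by gcongr
    _ = 3 * β * η * H ^ ((5 : ℝ) / 2) * d / δ := by rw [hrpow]; ring

theorem gradient_difference_bound_general
    (d H : ℕ) (β η δ : ℝ) (hβ : 0 ≤ β) (hη : 0 < η) (hδ : 0 < δ)
    (f : Tup d H → ℝ) (hf : ContDiff ℝ 2 f)
    (hsmooth : ∀ a b : Tup d H, ‖gradient f a - gradient f b‖ ≤ β * ‖a - b‖)
    (Ω : Type*) [MeasureSpace Ω] [IsProbabilityMeasure (ℙ : Measure Ω)]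
    (X : Ω → Tup d H) (x' : Ω → Ed d)
    (hXmeas : Measurable X) (hx'meas : Measurable x')
    (hL2 : Integrable (fun ω => ‖X ω - tup (fun _ => x' ω)‖ ^ 2) ℙ)
    (hclose : ∫ ω, ‖X ω - tup (fun _ => x' ω)‖ ^ 2 ∂ℙ ≤ 8 * η ^ 2 * (d : ℝ) ^ 2 * H ^ 4 / δ ^ 2) :
    ∫ ω, ‖(∑ i : Fin H, pgrad f (X ω) i)
        - gradient (fun z : Ed d => f (WithLp.toLp 2 (fun _ => z))) (x' ω)‖ ∂ℙ
      ≤ 3 * β * η * (H : ℝ) ^ ((5 : ℝ) / 2) * d / δ := by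
  have hmem : MemLp (fun ω => ‖X ω - tup (fun _ => x' ω)‖) 2 ℙ := by
    refine (memLp_two_iff_integrable_sq (Measurable.aestronglyMeasurable ?_)).2 hL2
    unfold tup
    fun_prop
  calc _ ≤ ∫ ω, √H * β * ‖X ω - tup (fun _ => x' ω)‖ ∂ℙ :=
        integral_mono_of_nonneg (.of_forall fun _ => norm_nonneg _)
          ((hmem.integrable one_le_two).const_mul _)
          (.of_forall fun ω => norm_sum_pgrad_sub_gradient_diag_le
            (hf.differentiable (by norm_num)) hsmooth (X ω) (x' ω))
    _ = √H * β * ∫ ω, ‖X ω - tup (fun _ => x' ω)‖ ∂ℙ := integral_const_mul _ _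
    _ ≤ √H * β * √(∫ ω, ‖X ω - tup (fun _ => x' ω)‖ ^ 2 ∂ℙ) := by
        gcongr; exact integral_le_sqrt_integral_sq hmem
    _ ≤ √H * β * √(8 * η ^ 2 * (d : ℝ) ^ 2 * H ^ 4 / δ ^ 2) := by gcongr
    _ ≤ 3 * β * η * (H : ℝ) ^ ((5 : ℝ) / 2) * d / δ :=
        sqrt_mul_sqrt_eight_mul_le (Nat.cast_nonneg _) (Nat.cast_nonneg _) hβ hη.le hδ.le

/-- Let `f : (ℝ^d)^H → ℝ` be twice differentiable with `β`-Lipschitz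
gradient, and `f̃(x) = f(x, …, x)`. If the random tuple `X` and random vector `x'` satisfy
`E[‖X − (x', …, x')‖²] ≤ 8 η² d² H⁴ / δ²`, then
`E[‖∑ i, ∇_i f (X) − ∇ f̃ (x')‖] ≤ 3 β η H^{5/2} d / δ`. -/
theorem gradient_difference_bound
    (d H : ℕ) (hd : 1 ≤ d) (hH : 1 ≤ H) (β η δ : ℝ) (hβ : 0 ≤ β) (hη : 0 < η) (hδ : 0 < δ)
    (f : Tup d H → ℝ) (hf : ContDiff ℝ 2 f)
    (hsmooth : ∀ a b : Tup d H, ‖gradient f a - gradient f b‖ ≤ β * ‖a - b‖)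
    (Ω : Type*) [MeasureSpace Ω] [IsProbabilityMeasure (ℙ : Measure Ω)]
    (X : Ω → Tup d H) (x' : Ω → Ed d)
    (hXmeas : Measurable X) (hx'meas : Measurable x')
    (hL2 : Integrable (fun ω => ‖X ω - tup (fun _ => x' ω)‖ ^ 2) ℙ)
    (hclose : ∫ ω, ‖X ω - tup (fun _ => x' ω)‖ ^ 2 ∂ℙ ≤ 8 * η ^ 2 * (d : ℝ) ^ 2 * H ^ 4 / δ ^ 2) :
    ∫ ω, ‖(∑ i : Fin H, pgrad f (X ω) i)
        - gradient (fun z : Ed d => f (WithLp.toLp 2 (fun _ => z))) (x' ω)‖ ∂ℙ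
      ≤ 3 * β * η * (H : ℝ) ^ ((5 : ℝ) / 2) * d / δ :=
  gradient_difference_bound_general d H β η δ hβ hη hδ f hf hsmooth Ω X x' hXmeas hx'meas hL2 hclose
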